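/- For every complex number x, ∑_{ν ∈ ℤ} (-1)^ν J_{6ν}(x) = (1/3)[cos x + 2 cos(x/2)], ∑_{ν ∈ ℤ} (-1)^ν J_{6ν+1}(x) = (1/3)[sin x + sin(x/2)], ∑_{ν ∈ ℤ} (-1)^ν J_{6ν+2}(x) = −(1/3)[cos x − cos(x/2)], and ∑_{ν ∈ ℤ} (-1)^ν J_{6ν+3}(x) = −(1/3)[sin x − 2 sin(x/2)]. -/

import Mathlib

/-!
Evaluating the generating function `exp (x / 2 * (t - t⁻¹)) = ∑ₙ Jₙ(x) tⁿ` (the Cauchy product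
of the exponential series of `x t / 2` and `-x / (2 t)`) at the six roots `ωⱼ = exp (i θⱼ)`,
`θⱼ = (2j + 1)π/6`, of `ω⁶ = -1` gives `exp (i x sin θⱼ)`. Averaging `ωⱼ^(-k)` times these
values keeps exactly the terms `n = 6ν + k`, with sign `ωⱼ^(6ν) = (-1)^ν`, so
`∑ν (-1)^ν J_{6ν+k}(x) = (1/6) ∑ⱼ exp (i (x sin θⱼ - k θⱼ))`. The symmetry `θ ↦ 2π - θ` of the
angles turns this into `(1/3) ∑_{j<3} cos (x sin θⱼ - k θⱼ)`, which for `k = 0, 1, 2, 3` is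
read off from `sin` and `cos` at multiples of `π/6`.
-/

open scoped Real

/-- Bessel function of the first kind of natural order `n`, via its power series. -/
noncomputable def besselJNat (n : ℕ) (x : ℂ) : ℂ :=
  ∑' m : ℕ, (-1 : ℂ) ^ m / ((m.factorial : ℂ) * ((m + n).factorial : ℂ)) * (x / 2) ^ (2 * m + n)

/-- Bessel function of the first kind of integer order, with `J_{-n} = (-1)^n J_n`. -/
noncomputable def besselJ (n : ℤ) (x : ℂ) : ℂ :=
  if 0 ≤ n then besselJNat n.toNat x else (-1 : ℂ) ^ n.natAbs * besselJNat n.natAbs x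

open Complex Finset

lemma besselJ_natCast (n : ℕ) (x : ℂ) : besselJ n x = besselJNat n x := by
  simp [besselJ]

lemma besselJ_neg_natCast (n : ℕ) (x : ℂ) : besselJ (-n) x = (-1) ^ n * besselJNat n x := by
  rcases n.eq_zero_or_pos with rfl | hn
  · simp [besselJ]
  · simp [besselJ, hn.ne']

def diffMinEquiv : ℕ × ℕ ≃ ℤ × ℕ where
  toFun p := ((p.1 : ℤ) - p.2, min p.1 p.2)
  invFun q := (q.2 + q.1.toNat, q.2 + (-q.1).toNat)
  left_inv p := by obtain ⟨a, b⟩ := p; simp only [Prod.mk.injEq]; omega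
  right_inv q := by obtain ⟨a, b⟩ := q; simp only [Prod.mk.injEq]; omega

lemma expSeries_mul_expSeries_inv (x t : ℂ) (ht : t ≠ 0) (p q : ℕ) :
    (x / 2 * t) ^ p / p.factorial * ((x / 2 * -t⁻¹) ^ q / q.factorial)
      = (-1) ^ q / (p.factorial * q.factorial) * (x / 2) ^ (p + q) * t ^ ((p : ℤ) - q) := by
  rw [zpow_sub₀ ht, zpow_natCast, zpow_natCast, mul_neg, neg_pow]
  ring

lemma hasSum_expSeries_mul_expSeries (z w : ℂ) :
    HasSum (fun p : ℕ × ℕ => z ^ p.1 / p.1.factorial * (w ^ p.2 / p.2.factorial))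
      (exp z * exp w) := by
  have hz : Summable fun n : ℕ => ‖z ^ n / (n.factorial : ℂ)‖ :=
    NormedSpace.norm_expSeries_div_summable _
  have hw : Summable fun n : ℕ => ‖w ^ n / (n.factorial : ℂ)‖ :=
    NormedSpace.norm_expSeries_div_summable _
  rw [exp_eq_exp_ℂ, NormedSpace.exp_eq_tsum_div]
  beta_reduce
  rw [tsum_mul_tsum_of_summable_norm hz hw]
  exact (summable_mul_of_summable_norm hz hw).hasSum

theorem hasSum_besselJ_mul_zpow (x t : ℂ) (ht : t ≠ 0) :
    HasSum (fun n : ℤ => besselJ n x * t ^ n) (exp (x / 2 * (t - t⁻¹))) := by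
  set F : ℕ × ℕ → ℂ := fun p =>
    (x / 2 * t) ^ p.1 / p.1.factorial * ((x / 2 * -t⁻¹) ^ p.2 / p.2.factorial)
  have hF : HasSum F (exp (x / 2 * (t - t⁻¹))) := by
    rw [show x / 2 * (t - t⁻¹) = x / 2 * t + x / 2 * -t⁻¹ by ring, exp_add]
    exact hasSum_expSeries_mul_expSeries _ _
  have hG : HasSum (F ∘ diffMinEquiv.symm) _ := (Equiv.hasSum_iff diffMinEquiv.symm).mpr hF
  refine hG.prod_fiberwise fun n => ?_
  have hfib := (hG.summable.prod_factor n).hasSum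
  obtain ⟨k, rfl | rfl⟩ := n.eq_nat_or_neg
  · have hterm : ∀ m : ℕ, (F ∘ diffMinEquiv.symm) (k, m)
        = (-1 : ℂ) ^ m / ((m.factorial : ℂ) * ((m + k).factorial : ℂ)) * (x / 2) ^ (2 * m + k)
          * t ^ (k : ℤ) := by
      intro m
      simp only [F, Function.comp_apply, diffMinEquiv, Equiv.coe_fn_symm_mk, Int.toNat_natCast,
        Int.toNat_neg_natCast, add_zero, expSeries_mul_expSeries_inv x t ht]
      rw [show ((m + k : ℕ) : ℤ) - m = k by push_cast; ring, show m + k + m = 2 * m + k by ring]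
      ring
    rw [besselJ_natCast, besselJNat]
    simpa only [hterm, tsum_mul_right] using hfib
  · have hterm : ∀ m : ℕ, (F ∘ diffMinEquiv.symm) (-k, m)
        = (-1 : ℂ) ^ m / ((m.factorial : ℂ) * ((m + k).factorial : ℂ)) * (x / 2) ^ (2 * m + k)
          * ((-1) ^ k * t ^ (-k : ℤ)) := by
      intro m
      simp only [F, Function.comp_apply, diffMinEquiv, Equiv.coe_fn_symm_mk, neg_neg,
        Int.toNat_natCast, Int.toNat_neg_natCast, add_zero, expSeries_mul_expSeries_inv x t ht]
      rw [show (m : ℤ) - (m + k : ℕ) = -k by push_cast; ring, show m + (m + k) = 2 * m + k by ring]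
      ring
    rw [besselJ_neg_natCast, mul_comm _ (besselJNat _ _), mul_assoc, besselJNat]
    simpa only [hterm, tsum_mul_right] using hfib

/-- `exp (oddAngle N j * I)`, `j < N`, are the `N` roots of `ω ^ N = -1`. -/
noncomputable def oddAngle (N j : ℕ) : ℂ := (2 * j + 1) * π / N

lemma sum_exp_mul_oddAngle {N : ℕ} (hN : N ≠ 0) (m : ℤ) :
    ∑ j ∈ range N, exp (m * oddAngle N j * I)
      = if (N : ℤ) ∣ m then N * (-1 : ℂ) ^ (m / N) else 0 := by
  set η := exp (2 * π * I / N)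
  have hη : IsPrimitiveRoot η N := isPrimitiveRoot_exp N hN
  have hterm : ∀ j : ℕ, exp (m * oddAngle N j * I) = exp (m * (π * I) / N) * (η ^ m) ^ j := by
    intro j
    rw [← exp_int_mul, ← exp_nat_mul, ← exp_add, oddAngle]
    congr 1
    field_simp
    ring
  simp only [hterm, ← mul_sum]
  split_ifs with hdvd
  · obtain ⟨q, rfl⟩ := hdvd
    have hN' : (N : ℂ) ≠ 0 := Nat.cast_ne_zero.mpr hN
    have harg : ((N * q : ℤ) : ℂ) * (π * I) / N = q * (π * I) := by
      push_cast
      field_simp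
    rw [(hη.zpow_eq_one_iff_dvd _).mpr (dvd_mul_right _ _), harg, exp_int_mul, exp_pi_mul_I,
      Int.mul_ediv_cancel_left _ (Int.natCast_ne_zero.mpr hN)]
    simp [mul_comm]
  · have hne : η ^ m ≠ 1 := (hη.zpow_eq_one_iff_dvd m).not.mpr hdvd
    have hpow : (η ^ m) ^ N = 1 := by
      rw [← zpow_natCast, ← zpow_mul, mul_comm, zpow_mul, zpow_natCast, hη.pow_eq_one, one_zpow]
    have hgeom := geom_sum_mul (η ^ m) N
    rw [hpow, sub_self, mul_eq_zero] at hgeom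
    rw [hgeom.resolve_right (sub_ne_zero.mpr hne), mul_zero]

theorem hasSum_neg_one_zpow_mul_comp_mul_add {f : ℤ → ℂ} {N : ℕ} (hN : N ≠ 0) {S : ℕ → ℂ}
    (hS : ∀ j ∈ range N, HasSum (fun n : ℤ => f n * exp (oddAngle N j * I) ^ n) (S j)) (k : ℤ) :
    HasSum (fun ν : ℤ => (-1) ^ ν * f (N * ν + k))
      ((∑ j ∈ range N, exp (-k * oddAngle N j * I) * S j) / N) := by
  have h := (hasSum_sum fun j hj => (hS j hj).mul_left (exp (-k * oddAngle N j * I))).div_const N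
  have hN' : (N : ℂ) ≠ 0 := Nat.cast_ne_zero.mpr hN
  have hsummand : ∀ n : ℤ,
      (∑ j ∈ range N, exp (-k * oddAngle N j * I) * (f n * exp (oddAngle N j * I) ^ n)) / N
        = f n * if (N : ℤ) ∣ n - k then (-1 : ℂ) ^ ((n - k) / N) else 0 := by
    intro n
    have hsum : ∑ j ∈ range N, exp (-k * oddAngle N j * I) * (f n * exp (oddAngle N j * I) ^ n)
        = f n * ∑ j ∈ range N, exp ((n - k : ℤ) * oddAngle N j * I) := by
      rw [mul_sum]
      refine sum_congr rfl fun j _ => ?_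
      rw [← exp_int_mul, mul_left_comm, ← exp_add]
      push_cast
      ring_nf
    rw [hsum, sum_exp_mul_oddAngle hN]
    split_ifs
    · field_simp
    · simp
  simp only [hsummand] at h
  have hinj : Function.Injective fun ν : ℤ => N * ν + k := by
    intro a b hab
    simpa [hN] using hab
  have hsupp : ∀ n ∉ Set.range fun ν : ℤ => N * ν + k,
      (f n * if (N : ℤ) ∣ n - k then (-1 : ℂ) ^ ((n - k) / N) else 0) = 0 := by
    rintro n hn
    rw [if_neg, mul_zero]
    rintro ⟨ν, hν⟩
    exact hn ⟨ν, by simp only; omega⟩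
  rw [← hinj.hasSum_iff hsupp] at h
  convert h using 1
  ext ν
  simp [hN, mul_comm]

noncomputable def besselPhase (N : ℕ) (k : ℤ) (x : ℂ) (j : ℕ) : ℂ :=
  x * sin (oddAngle N j) - k * oddAngle N j

lemma besselPhase_of_add_add_one_eq {N : ℕ} (k : ℤ) (x : ℂ) {i j : ℕ} (hij : i + j + 1 = N) :
    besselPhase N k x i = -besselPhase N k x j - k * (2 * π) := by
  have hθ : oddAngle N i = 2 * π - oddAngle N j := by
    have hN : ((i + j + 1 : ℕ) : ℂ) ≠ 0 := Nat.cast_ne_zero.mpr (Nat.succ_ne_zero _)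
    rw [oddAngle, oddAngle, ← hij]
    field_simp
    push_cast
    ring
  rw [besselPhase, besselPhase, hθ, sin_two_pi_sub]
  ring

lemma sum_exp_besselPhase_eq_sum_cos (N : ℕ) (k : ℤ) (x : ℂ) :
    ∑ j ∈ range N, exp (besselPhase N k x j * I) = ∑ j ∈ range N, cos (besselPhase N k x j) := by
  have hreflect : ∑ j ∈ range N, exp (besselPhase N k x j * I)
      = ∑ j ∈ range N, exp (-besselPhase N k x j * I) := by
    rw [← sum_range_reflect]
    refine sum_congr rfl fun j hj => ?_
    rw [besselPhase_of_add_add_one_eq k x (i := N - 1 - j) (j := j) (by simp at hj; omega),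
      sub_mul, exp_sub, show (k : ℂ) * (2 * π) * I = k * (2 * π * I) by ring,
      exp_int_mul_two_pi_mul_I, div_one]
  simp only [cos]
  rw [← sum_div, sum_add_distrib, ← hreflect]
  ring

theorem tsum_neg_one_zpow_mul_besselJ {N : ℕ} (hN : N ≠ 0) (k : ℤ) (x : ℂ) :
    ∑' ν : ℤ, (-1) ^ ν * besselJ (N * ν + k) x
      = (∑ j ∈ range N, cos (besselPhase N k x j)) / N := by
  have hgen : ∀ j ∈ range N, HasSum (fun n : ℤ => besselJ n x * exp (oddAngle N j * I) ^ n)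
      (exp (x * sin (oddAngle N j) * I)) := by
    intro j _
    convert hasSum_besselJ_mul_zpow x _ (exp_ne_zero (oddAngle N j * I)) using 2
    rw [← exp_neg, sin]
    ring_nf
    rw [I_sq]
    ring
  rw [(hasSum_neg_one_zpow_mul_comp_mul_add hN hgen k).tsum_eq, ← sum_exp_besselPhase_eq_sum_cos]
  congr 1
  refine sum_congr rfl fun j _ => ?_
  rw [← exp_add, besselPhase]
  ring_nf

lemma cos_besselPhase_of_add_add_one_eq {N : ℕ} (k : ℤ) (x : ℂ) {i j : ℕ} (hij : i + j + 1 = N) :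
    cos (besselPhase N k x i) = cos (besselPhase N k x j) := by
  rw [besselPhase_of_add_add_one_eq k x hij, cos_sub_int_mul_two_pi, cos_neg]

lemma Complex.sin_pi_div_six : sin (π / 6 : ℂ) = 1 / 2 := by
  have h := congrArg ((↑) : ℝ → ℂ) Real.sin_pi_div_six
  push_cast at h
  exact h

lemma Complex.cos_pi_div_three : cos (π / 3 : ℂ) = 1 / 2 := by
  have h := congrArg ((↑) : ℝ → ℂ) Real.cos_pi_div_three
  push_cast at h
  exact h

theorem tsum_neg_one_zpow_mul_besselJ_six_mul_add (k : ℤ) (x : ℂ) :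
    ∑' ν : ℤ, (-1) ^ ν * besselJ (6 * ν + k) x
      = (2 * cos (k * π / 3) * cos (x / 2 - k * π / 2) + cos (x - k * π / 2)) / 3 := by
  have h := tsum_neg_one_zpow_mul_besselJ (N := 6) (by norm_num) k x
  push_cast at h
  have h0 : besselPhase 6 k x 0 = x / 2 - k * π / 6 := by
    rw [besselPhase, oddAngle]
    norm_num [Complex.sin_pi_div_six]
    ring
  have h1 : besselPhase 6 k x 1 = x - k * π / 2 := by
    rw [besselPhase, oddAngle]
    norm_num [show (3 : ℂ) * π / 6 = π / 2 by ring]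
    ring
  have h2 : besselPhase 6 k x 2 = x / 2 - 5 * k * π / 6 := by
    rw [besselPhase, oddAngle,
      show ((2 * (2 : ℕ) + 1 : ℂ)) * π / (6 : ℕ) = π - π / 6 by push_cast; ring, sin_pi_sub,
      Complex.sin_pi_div_six]
    ring
  have hpair : cos (besselPhase 6 k x 0) + cos (besselPhase 6 k x 2)
      = 2 * cos (k * π / 3) * cos (x / 2 - k * π / 2) := by
    rw [h0, h2, cos_add_cos]
    ring_nf
  rw [h]
  simp only [sum_range_succ, sum_range_zero, zero_add,
    cos_besselPhase_of_add_add_one_eq k x (show 3 + 2 + 1 = 6 by rfl),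
    cos_besselPhase_of_add_add_one_eq k x (show 4 + 1 + 1 = 6 by rfl),
    cos_besselPhase_of_add_add_one_eq k x (show 5 + 0 + 1 = 6 by rfl)]
  rw [← h1]
  linear_combination 2 / 6 * hpair

theorem stmt_12 (x : ℂ) :
    (∑' ν : ℤ, (-1 : ℂ) ^ ν * besselJ (6 * ν) x
        = (1 / 3) * (Complex.cos x + 2 * Complex.cos (x / 2))) ∧
    (∑' ν : ℤ, (-1 : ℂ) ^ ν * besselJ (6 * ν + 1) x
        = (1 / 3) * (Complex.sin x + Complex.sin (x / 2))) ∧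
    (∑' ν : ℤ, (-1 : ℂ) ^ ν * besselJ (6 * ν + 2) x
        = -((1 / 3) * (Complex.cos x - Complex.cos (x / 2)))) ∧
    (∑' ν : ℤ, (-1 : ℂ) ^ ν * besselJ (6 * ν + 3) x
        = -((1 / 3) * (Complex.sin x - 2 * Complex.sin (x / 2)))) := by
  refine ⟨?_, ?_, ?_, ?_⟩
  · have h := tsum_neg_one_zpow_mul_besselJ_six_mul_add 0 x
    simp only [Int.cast_zero, zero_mul, zero_div, add_zero, cos_zero, sub_zero] at h
    rw [h]
    ring
  · rw [tsum_neg_one_zpow_mul_besselJ_six_mul_add 1 x, Int.cast_one]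
    simp only [one_mul]
    rw [Complex.cos_pi_div_three, cos_sub_pi_div_two, cos_sub_pi_div_two]
    ring
  · rw [tsum_neg_one_zpow_mul_besselJ_six_mul_add 2 x]
    push_cast
    rw [show (2 : ℂ) * π / 3 = π - π / 3 by ring, show (2 : ℂ) * π / 2 = π by ring, cos_pi_sub,
      Complex.cos_pi_div_three, cos_sub_pi, cos_sub_pi]
    ring
  · rw [tsum_neg_one_zpow_mul_besselJ_six_mul_add 3 x]
    push_cast
    rw [show (3 : ℂ) * π / 3 = π by ring, cos_pi]
    simp only [show ∀ y : ℂ, y - 3 * π / 2 = y - π / 2 - π from fun y => by ring, cos_sub_pi,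
      cos_sub_pi_div_two]
    ring
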